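/- arXiv:2103.13560 — 4 statements merged into one kernel-verified Lean document; each statement's English description precedes it below -/
import Mathlib

section
/- Let (x*, λ*, μ*) be a saddle point of the Lagrangian L. Let γ ∈ ℝ^m, ν ∈ ℝ^M_{≥0}, ρ > 0, and let x_i^k ∈ X_i for each i. Suppose for each i = 1,…,N the point x_i^{k+1} minimizes x_i ↦ f_i(x_i) + γᵀ A_i x_i + Σ_{j=1}^M ν_j g_{ji}(x_i) + (1/(2ρ))‖x_i − x_i^k‖₂² over X_i. Then Σ_{i=1}^N ‖x_i^{k+1} − x*_i‖₂² ≤ Σ_{i=1}^N ‖x_i^k − x*_i‖₂² − Σ_{i=1}^N ‖x_i^{k+1} − x_i^k‖₂² + 2ρ·[ (λ* − γ)ᵀ(Σ_{i=1}^N A_i x_i^{k+1} − b) + Σ_{j=1}^M (μ*_j − ν_j)·Σ_{i=1}^N g_{ji}(x_i^{k+1}) ]. -/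
open scoped BigOperators

/-- The Lagrangian `L(x, λ, μ) = Σᵢ fᵢ(xᵢ) + λᵀ(Σᵢ Aᵢ xᵢ − b) + Σⱼ μⱼ Σᵢ g_{ji}(xᵢ)`. -/
noncomputable def lagrangian {N M m : ℕ} {n : Fin N → ℕ}
    (f : ∀ i, EuclideanSpace ℝ (Fin (n i)) → ℝ)
    (A : ∀ i, EuclideanSpace ℝ (Fin (n i)) →L[ℝ] EuclideanSpace ℝ (Fin m))
    (b : EuclideanSpace ℝ (Fin m))
    (g : Fin M → ∀ i, EuclideanSpace ℝ (Fin (n i)) → ℝ)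
    (x : ∀ i, EuclideanSpace ℝ (Fin (n i)))
    (lam : EuclideanSpace ℝ (Fin m)) (mu : EuclideanSpace ℝ (Fin M)) : ℝ :=
  (∑ i, f i (x i)) + (inner ℝ lam ((∑ i, A i (x i)) - b) : ℝ)
    + ∑ j, mu j * ∑ i, g j i (x i)

/-- `(x*, λ*, μ*)` is a saddle point of the Lagrangian:
`x*ᵢ ∈ Xᵢ`, `μ* ≥ 0`, and `L(x*, λ, μ) ≤ L(x*, λ*, μ*) ≤ L(x, λ*, μ*)` for all feasible
`x`, all `λ ∈ ℝ^m` and all `μ ∈ ℝ^M_{≥0}`. -/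
noncomputable def IsSaddlePoint {N M m : ℕ} {n : Fin N → ℕ}
    (f : ∀ i, EuclideanSpace ℝ (Fin (n i)) → ℝ)
    (A : ∀ i, EuclideanSpace ℝ (Fin (n i)) →L[ℝ] EuclideanSpace ℝ (Fin m))
    (b : EuclideanSpace ℝ (Fin m))
    (g : Fin M → ∀ i, EuclideanSpace ℝ (Fin (n i)) → ℝ)
    (X : ∀ i, Set (EuclideanSpace ℝ (Fin (n i))))
    (xs : ∀ i, EuclideanSpace ℝ (Fin (n i)))
    (ls : EuclideanSpace ℝ (Fin m)) (ms : EuclideanSpace ℝ (Fin M)) : Prop :=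
  (∀ i, xs i ∈ X i) ∧ (∀ j, 0 ≤ ms j) ∧
  (∀ (lam : EuclideanSpace ℝ (Fin m)) (mu : EuclideanSpace ℝ (Fin M)), (∀ j, 0 ≤ mu j) →
    lagrangian f A b g xs lam mu ≤ lagrangian f A b g xs ls ms) ∧
  (∀ x : ∀ i, EuclideanSpace ℝ (Fin (n i)), (∀ i, x i ∈ X i) →
    lagrangian f A b g xs ls ms ≤ lagrangian f A b g x ls ms)

/-! The objective `φᵢ = fᵢ + γᵀAᵢ + Σⱼ νⱼ g_{ji} + ‖· - xᵢᵏ‖² / (2ρ)` of block `i` is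
`(1/ρ)`-strongly convex, so its minimiser `xᵢᵏ⁺¹` over `Xᵢ` satisfies
`φᵢ(xᵢᵏ⁺¹) + ‖x*ᵢ - xᵢᵏ⁺¹‖² / (2ρ) ≤ φᵢ(x*ᵢ)`. Summed over the blocks, the objective values
become `L(x*, γ, ν) - L(xᵏ⁺¹, γ, ν)`, and the two saddle inequalities bound this by
`L(xᵏ⁺¹, λ*, μ*) - L(xᵏ⁺¹, γ, ν)`, which is the bracket in the claim. -/

section StrongConvexity

variable {E : Type*} [NormedAddCommGroup E] [InnerProductSpace ℝ E]
  {s : Set E} {h : E → ℝ} {m c : ℝ} {x y z : E}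

lemma StrongConvexOn.add_mul_sq_norm_sub_le_of_isMinOn (hh : StrongConvexOn s m h)
    (hx : x ∈ s) (hy : y ∈ s) (hmin : IsMinOn h s x) :
    h x + m / 2 * ‖y - x‖ ^ 2 ≤ h y := by
  have hsegment : ∀ t ∈ Set.Ioo (0 : ℝ) 1, h x + (1 - t) * (m / 2 * ‖y - x‖ ^ 2) ≤ h y := by
    rintro t ⟨ht₀, ht₁⟩
    have hconv := hh.2 hx hy (sub_nonneg.2 ht₁.le) ht₀.le (sub_add_cancel 1 t)
    have hle := isMinOn_iff.1 hmin _ (hh.1 hx hy (sub_nonneg.2 ht₁.le) ht₀.le (sub_add_cancel 1 t))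
    rw [norm_sub_rev] at hconv
    simp only [smul_eq_mul] at hconv
    have hscaled : t * (h x + (1 - t) * (m / 2 * ‖y - x‖ ^ 2)) ≤ t * h y := by linarith
    exact le_of_mul_le_mul_left hscaled ht₀
  have hlim : Filter.Tendsto (fun t : ℝ => h x + (1 - t) * (m / 2 * ‖y - x‖ ^ 2))
      (nhdsWithin 0 (Set.Ioi 0)) (nhds (h x + m / 2 * ‖y - x‖ ^ 2)) := by
    refine tendsto_nhdsWithin_of_tendsto_nhds ?_
    have hcont : Continuous fun t : ℝ => h x + (1 - t) * (m / 2 * ‖y - x‖ ^ 2) := by fun_prop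
    simpa using hcont.tendsto 0
  exact le_of_tendsto hlim (Filter.eventually_of_mem (Ioo_mem_nhdsGT one_pos) hsegment)

lemma ConvexOn.strongConvexOn_add_mul_sq_norm_sub (hh : ConvexOn ℝ s h) :
    StrongConvexOn s (2 * c) (fun w => h w + c * ‖w - z‖ ^ 2) := by
  rw [strongConvexOn_iff_convex]
  have hlin : ConvexOn ℝ s fun w => (-(2 * c)) * inner ℝ z w :=
    ((-(2 * c)) • innerₗ E z).convexOn hh.1
  refine ((hh.add hlin).add_const (c * ‖z‖ ^ 2)).congr fun w _ => ?_
  simp only [Pi.add_apply]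
  rw [norm_sub_sq_real, real_inner_comm]
  ring

lemma ConvexOn.add_mul_sq_norm_sub_le_of_isMinOn (hh : ConvexOn ℝ s h)
    (hx : x ∈ s) (hy : y ∈ s) (hmin : IsMinOn (fun w => h w + c * ‖w - z‖ ^ 2) s x) :
    h x + c * ‖x - z‖ ^ 2 + c * ‖y - x‖ ^ 2 ≤ h y + c * ‖y - z‖ ^ 2 := by
  have hstrong :=
    hh.strongConvexOn_add_mul_sq_norm_sub.add_mul_sq_norm_sub_le_of_isMinOn hx hy hmin
  linarith

end StrongConvexity

section Lagrangian

variable {N M m : ℕ} {n : Fin N → ℕ}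
  (f : ∀ i, EuclideanSpace ℝ (Fin (n i)) → ℝ)
  (A : ∀ i, EuclideanSpace ℝ (Fin (n i)) →L[ℝ] EuclideanSpace ℝ (Fin m))
  (b : EuclideanSpace ℝ (Fin m))
  (g : Fin M → ∀ i, EuclideanSpace ℝ (Fin (n i)) → ℝ)

/-- The proximal subproblem of block `i` minimises this plus `‖xᵢ - xᵢᵏ‖² / (2ρ)`. -/
noncomputable def blockLagrangian (lam : EuclideanSpace ℝ (Fin m))
    (mu : EuclideanSpace ℝ (Fin M)) (i : Fin N) (w : EuclideanSpace ℝ (Fin (n i))) : ℝ :=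
  f i w + inner ℝ lam (A i w) + ∑ j, mu j * g j i w

lemma sum_blockLagrangian (x : ∀ i, EuclideanSpace ℝ (Fin (n i)))
    (lam : EuclideanSpace ℝ (Fin m)) (mu : EuclideanSpace ℝ (Fin M)) :
    ∑ i, blockLagrangian f A g lam mu i (x i)
      = lagrangian f A b g x lam mu + inner ℝ lam b := by
  simp only [blockLagrangian, lagrangian, Finset.sum_add_distrib, Finset.mul_sum,
    inner_sub_right, inner_sum]
  rw [Finset.sum_comm (f := fun i j => mu j * g j i (x i))]
  ring

lemma convexOn_blockLagrangian {i : Fin N} (hf : ConvexOn ℝ Set.univ (f i))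
    (hg : ∀ j, ConvexOn ℝ Set.univ (g j i)) (lam : EuclideanSpace ℝ (Fin m))
    {mu : EuclideanSpace ℝ (Fin M)} (hmu : ∀ j, 0 ≤ mu j) :
    ConvexOn ℝ Set.univ (blockLagrangian f A g lam mu i) := by
  have hlin : ConvexOn ℝ Set.univ fun w => inner ℝ lam (A i w) :=
    ((innerₗ _ lam).comp (A i).toLinearMap).convexOn convex_univ
  have hpenalty : ConvexOn ℝ Set.univ fun w => ∑ j, mu j * g j i w := by
    have hsum := Finset.sum_induction (s := Finset.univ) (fun j w => mu j * g j i w)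
      (ConvexOn ℝ Set.univ) (fun _ _ => ConvexOn.add) (convexOn_const 0 convex_univ)
      fun j _ => (hg j).smul (hmu j)
    rwa [Finset.sum_fn] at hsum
  exact (hf.add hlin).add hpenalty

lemma lagrangian_sub_lagrangian (x : ∀ i, EuclideanSpace ℝ (Fin (n i)))
    (lam lam' : EuclideanSpace ℝ (Fin m)) (mu mu' : EuclideanSpace ℝ (Fin M)) :
    lagrangian f A b g x lam mu - lagrangian f A b g x lam' mu'
      = inner ℝ (lam - lam') ((∑ i, A i (x i)) - b)
        + ∑ j, (mu j - mu' j) * ∑ i, g j i (x i) := by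
  simp only [lagrangian, inner_sub_left, sub_mul, Finset.sum_sub_distrib]
  ring

end Lagrangian

theorem stmt_3_general {N M m : ℕ} {n : Fin N → ℕ}
    (f : ∀ i, EuclideanSpace ℝ (Fin (n i)) → ℝ)
    (A : ∀ i, EuclideanSpace ℝ (Fin (n i)) →L[ℝ] EuclideanSpace ℝ (Fin m))
    (b : EuclideanSpace ℝ (Fin m))
    (g : Fin M → ∀ i, EuclideanSpace ℝ (Fin (n i)) → ℝ)
    (X : ∀ i, Set (EuclideanSpace ℝ (Fin (n i))))
    (hX : ∀ i, IsClosed (X i) ∧ Convex ℝ (X i))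
    (hf : ∀ i, Continuous (f i) ∧ ConvexOn ℝ Set.univ (f i))
    (hg : ∀ j i, Continuous (g j i) ∧ ConvexOn ℝ Set.univ (g j i))
    (xs : ∀ i, EuclideanSpace ℝ (Fin (n i)))
    (ls : EuclideanSpace ℝ (Fin m)) (ms : EuclideanSpace ℝ (Fin M))
    (hsaddle : IsSaddlePoint f A b g X xs ls ms)
    (γ : EuclideanSpace ℝ (Fin m)) (ν : EuclideanSpace ℝ (Fin M)) (hν : ∀ j, 0 ≤ ν j)
    (ρ : ℝ) (hρ : 0 < ρ)
    (xk : ∀ i, EuclideanSpace ℝ (Fin (n i)))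
    (xk1 : ∀ i, EuclideanSpace ℝ (Fin (n i))) (hxk1 : ∀ i, xk1 i ∈ X i)
    (hmin : ∀ i, ∀ y ∈ X i,
      f i (xk1 i) + (inner ℝ γ (A i (xk1 i)) : ℝ) + (∑ j, ν j * g j i (xk1 i))
          + 1 / (2 * ρ) * ‖xk1 i - xk i‖ ^ 2
        ≤ f i y + (inner ℝ γ (A i y) : ℝ) + (∑ j, ν j * g j i y)
          + 1 / (2 * ρ) * ‖y - xk i‖ ^ 2) :
    ∑ i, ‖xk1 i - xs i‖ ^ 2
      ≤ ∑ i, ‖xk i - xs i‖ ^ 2 - ∑ i, ‖xk1 i - xk i‖ ^ 2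
        + 2 * ρ * ((inner ℝ (ls - γ) ((∑ i, A i (xk1 i)) - b) : ℝ)
          + ∑ j, (ms j - ν j) * ∑ i, g j i (xk1 i)) := by
  obtain ⟨hxs, -, hdual, hprimal⟩ := hsaddle
  set c := 1 / (2 * ρ) with hc
  have hblock : ∀ i, blockLagrangian f A g γ ν i (xk1 i) + c * ‖xk1 i - xk i‖ ^ 2
      + c * ‖xk1 i - xs i‖ ^ 2 ≤ blockLagrangian f A g γ ν i (xs i) + c * ‖xk i - xs i‖ ^ 2 := by
    intro i
    have hconv := (convexOn_blockLagrangian f A g (hf i).2 (fun j => (hg j i).2) γ hν).subset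
      (Set.subset_univ _) (hX i).2
    have hprox : IsMinOn (fun w => blockLagrangian f A g γ ν i w + c * ‖w - xk i‖ ^ 2)
        (X i) (xk1 i) :=
      isMinOn_iff.2 (hmin i)
    rw [norm_sub_rev (xk1 i) (xs i), norm_sub_rev (xk i) (xs i)]
    exact hconv.add_mul_sq_norm_sub_le_of_isMinOn (hxk1 i) (hxs i) hprox
  have hsum := Finset.sum_le_sum fun i (_ : i ∈ Finset.univ) => hblock i
  simp only [Finset.sum_add_distrib, ← Finset.mul_sum, sum_blockLagrangian f A b g] at hsum
  have hchain : lagrangian f A b g xs γ ν ≤ lagrangian f A b g xk1 ls ms :=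
    (hdual γ ν hν).trans (hprimal xk1 hxk1)
  have hgap := lagrangian_sub_lagrangian f A b g xk1 ls γ ms ν
  have hscaled : c * (∑ i, ‖xk1 i - xs i‖ ^ 2 + ∑ i, ‖xk1 i - xk i‖ ^ 2 - ∑ i, ‖xk i - xs i‖ ^ 2)
      ≤ inner ℝ (ls - γ) ((∑ i, A i (xk1 i)) - b) + ∑ j, (ms j - ν j) * ∑ i, g j i (xk1 i) := by
    linarith
  rw [hc, one_div, inv_mul_le_iff₀ (by positivity)] at hscaled
  linarith

/-- primal distance estimate, Proposition 1, first inequality. -/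
theorem stmt_3 {N M m : ℕ} {n : Fin N → ℕ}
    (f : ∀ i, EuclideanSpace ℝ (Fin (n i)) → ℝ)
    (A : ∀ i, EuclideanSpace ℝ (Fin (n i)) →L[ℝ] EuclideanSpace ℝ (Fin m))
    (b : EuclideanSpace ℝ (Fin m))
    (g : Fin M → ∀ i, EuclideanSpace ℝ (Fin (n i)) → ℝ)
    (X : ∀ i, Set (EuclideanSpace ℝ (Fin (n i))))
    (hX : ∀ i, IsClosed (X i) ∧ Convex ℝ (X i))
    (hf : ∀ i, Continuous (f i) ∧ ConvexOn ℝ Set.univ (f i))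
    (hg : ∀ j i, Continuous (g j i) ∧ ConvexOn ℝ Set.univ (g j i))
    (xs : ∀ i, EuclideanSpace ℝ (Fin (n i)))
    (ls : EuclideanSpace ℝ (Fin m)) (ms : EuclideanSpace ℝ (Fin M))
    (hsaddle : IsSaddlePoint f A b g X xs ls ms)
    (γ : EuclideanSpace ℝ (Fin m)) (ν : EuclideanSpace ℝ (Fin M)) (hν : ∀ j, 0 ≤ ν j)
    (ρ : ℝ) (hρ : 0 < ρ)
    (xk : ∀ i, EuclideanSpace ℝ (Fin (n i))) (hxk : ∀ i, xk i ∈ X i)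
    (xk1 : ∀ i, EuclideanSpace ℝ (Fin (n i))) (hxk1 : ∀ i, xk1 i ∈ X i)
    (hmin : ∀ i, ∀ y ∈ X i,
      f i (xk1 i) + (inner ℝ γ (A i (xk1 i)) : ℝ) + (∑ j, ν j * g j i (xk1 i))
          + 1 / (2 * ρ) * ‖xk1 i - xk i‖ ^ 2
        ≤ f i y + (inner ℝ γ (A i y) : ℝ) + (∑ j, ν j * g j i y)
          + 1 / (2 * ρ) * ‖y - xk i‖ ^ 2) :
    ∑ i, ‖xk1 i - xs i‖ ^ 2
      ≤ ∑ i, ‖xk i - xs i‖ ^ 2 - ∑ i, ‖xk1 i - xk i‖ ^ 2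
        + 2 * ρ * ((inner ℝ (ls - γ) ((∑ i, A i (xk1 i)) - b) : ℝ)
          + ∑ j, (ms j - ν j) * ∑ i, g j i (xk1 i)) :=
  stmt_3_general f A b g X hX hf hg xs ls ms hsaddle γ ν hν ρ hρ xk xk1 hxk1 hmin
end

section
/- Let (x*, λ*, μ*) be a saddle point of the Lagrangian L. Let ρ > 0, let x_i^k, x_i^{k+1} ∈ X_i for each i, let λ^k ∈ ℝ^m and μ^k ∈ ℝ^M_{≥0}, and define γ^{k+1} = λ^k + ρ(Σ_i A_i x_i^k − b), ν_j^{k+1} = max(0, μ_j^k + ρ Σ_i g_{ji}(x_i^k)), λ^{k+1} = λ^k + ρ(Σ_i A_i x_i^{k+1} − b), and μ_j^{k+1} = max(0, μ_j^k + ρ Σ_i g_{ji}(x_i^{k+1})). Then ‖λ^{k+1} − λ*‖₂² + ‖μ^{k+1} − μ*‖₂² ≤ ‖λ^k − λ*‖₂² + ‖μ^k − μ*‖₂² − ‖γ^{k+1} − λ^{k+1}‖₂² − ‖ν^{k+1} − μ^{k+1}‖₂² − ‖γ^{k+1} − λ^k‖₂² − ‖ν^{k+1} − μ^k‖₂² +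 2ρ·[ (γ^{k+1} − λ^{k+1})ᵀ(Σ_i A_i x_i^k − b) + Σ_j (ν_j^{k+1} − μ_j^{k+1})·Σ_i g_{ji}(x_i^k) + (λ^{k+1} − λ*)ᵀ(Σ_i A_i x_i^{k+1} − b) + Σ_j (μ_j^{k+1} − μ*_j)·Σ_i g_{ji}(x_i^{k+1}) ]. -/
open scoped BigOperators

/-!
Both dual updates are projected gradient steps from the current multiplier `u`: `λ` is projected
onto all of `ℝ^m` and `μ` onto the nonnegative orthant, from the trial points `u + ρ p` (giving
`γ`, `ν`) and `u + ρ q` (giving `λ^{k+1}`, `μ^{k+1}`). A polarization identity expresses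
`‖w − z‖²` through `‖u − z‖²`, the step lengths and two inner products; the variational inequalities of the
two projections, tested against `w` and against the (feasible) dual optimum `z`, bound the two
inner products `⟪v − w, v − u⟫` and `⟪w − z, w − u⟫` by `ρ⟪v − w, p⟫` and `ρ⟪w − z, q⟫`.
-/

open scoped InnerProductSpace

section ProjectedStep

variable {E : Type*} [NormedAddCommGroup E] [InnerProductSpace ℝ E]

theorem norm_sub_sq_eq_three_point (u v w z : E) :
    ‖w - z‖ ^ 2 = ‖u - z‖ ^ 2 - ‖v - w‖ ^ 2 - ‖v - u‖ ^ 2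
      + 2 * ⟪v - w, v - u⟫_ℝ + 2 * ⟪w - z, w - u⟫_ℝ := by
  have key (a c d : E) : ‖c - d‖ ^ 2 = ‖-d‖ ^ 2 - ‖a - c‖ ^ 2 - ‖a‖ ^ 2
      + 2 * ⟪a - c, a⟫_ℝ + 2 * ⟪c - d, c⟫_ℝ := by
    simp only [norm_neg, norm_sub_sq_real, inner_sub_left, real_inner_self_eq_norm_sq,
      real_inner_comm a c, real_inner_comm d c]
    ring
  convert key (v - u) (w - u) (z - u) using 3 <;> abel_nf

theorem norm_sub_sq_le_of_projected_steps {ρ : ℝ} {u v w z p q : E}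
    (hv : ⟪u + ρ • p - v, w - v⟫_ℝ ≤ 0) (hw : ⟪u + ρ • q - w, z - w⟫_ℝ ≤ 0) :
    ‖w - z‖ ^ 2 ≤ ‖u - z‖ ^ 2 - ‖v - w‖ ^ 2 - ‖v - u‖ ^ 2
      + 2 * ρ * (⟪v - w, p⟫_ℝ + ⟪w - z, q⟫_ℝ) := by
  have hv' : ⟪v - w, v - u⟫_ℝ ≤ ρ * ⟪v - w, p⟫_ℝ := by
    have : u + ρ • p - v = ρ • p - (v - u) := by abel
    rw [this, ← neg_sub v w, inner_neg_right, inner_sub_left, real_inner_smul_left,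
      real_inner_comm (v - w) p, real_inner_comm (v - w) (v - u)] at hv
    linarith
  have hw' : ⟪w - z, w - u⟫_ℝ ≤ ρ * ⟪w - z, q⟫_ℝ := by
    have : u + ρ • q - w = ρ • q - (w - u) := by abel
    rw [this, ← neg_sub w z, inner_neg_right, inner_sub_left, real_inner_smul_left,
      real_inner_comm (w - z) q, real_inner_comm (w - z) (w - u)] at hw
    linarith
  linarith [norm_sub_sq_eq_three_point u v w z]

end ProjectedStep

theorem sub_max_zero_mul_sub_max_zero_nonpos {y z : ℝ} (hz : 0 ≤ z) :
    (y - max 0 y) * (z - max 0 y) ≤ 0 := by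
  rcases le_total y 0 with hy | hy
  · rw [max_eq_left hy]; nlinarith
  · rw [max_eq_right hy]; simp

theorem EuclideanSpace.inner_eq_sum_mul {ι : Type*} [Fintype ι] (x y : EuclideanSpace ℝ ι) :
    ⟪x, y⟫_ℝ = ∑ j, x j * y j := by
  simp [PiLp.inner_apply, mul_comm]

theorem EuclideanSpace.inner_sub_posPart_nonpos {ι : Type*} [Fintype ι]
    {y v z : EuclideanSpace ℝ ι} (hv : ∀ j, v j = max 0 (y j)) (hz : ∀ j, 0 ≤ z j) :
    ⟪y - v, z - v⟫_ℝ ≤ 0 := by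
  rw [EuclideanSpace.inner_eq_sum_mul]
  refine Finset.sum_nonpos fun j _ => ?_
  simpa only [PiLp.sub_apply, hv j] using sub_max_zero_mul_sub_max_zero_nonpos (hz j)

theorem stmt_4_general {N M m : ℕ} {n : Fin N → ℕ}
    (f : ∀ i, EuclideanSpace ℝ (Fin (n i)) → ℝ)
    (A : ∀ i, EuclideanSpace ℝ (Fin (n i)) →L[ℝ] EuclideanSpace ℝ (Fin m))
    (b : EuclideanSpace ℝ (Fin m))
    (g : Fin M → ∀ i, EuclideanSpace ℝ (Fin (n i)) → ℝ)
    (X : ∀ i, Set (EuclideanSpace ℝ (Fin (n i))))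
    (xs : ∀ i, EuclideanSpace ℝ (Fin (n i)))
    (ls : EuclideanSpace ℝ (Fin m)) (ms : EuclideanSpace ℝ (Fin M))
    (hsaddle : IsSaddlePoint f A b g X xs ls ms)
    (ρ : ℝ)
    (xk : ∀ i, EuclideanSpace ℝ (Fin (n i)))
    (xk1 : ∀ i, EuclideanSpace ℝ (Fin (n i)))
    (lamk : EuclideanSpace ℝ (Fin m)) (muk : EuclideanSpace ℝ (Fin M))
    (γ : EuclideanSpace ℝ (Fin m)) (ν : EuclideanSpace ℝ (Fin M))
    (lamk1 : EuclideanSpace ℝ (Fin m)) (muk1 : EuclideanSpace ℝ (Fin M))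
    (hγ : γ = lamk + ρ • ((∑ i, A i (xk i)) - b))
    (hν : ∀ j, ν j = max 0 (muk j + ρ * ∑ i, g j i (xk i)))
    (hlamk1 : lamk1 = lamk + ρ • ((∑ i, A i (xk1 i)) - b))
    (hmuk1 : ∀ j, muk1 j = max 0 (muk j + ρ * ∑ i, g j i (xk1 i))) :
    ‖lamk1 - ls‖ ^ 2 + ‖muk1 - ms‖ ^ 2
      ≤ ‖lamk - ls‖ ^ 2 + ‖muk - ms‖ ^ 2
        - ‖γ - lamk1‖ ^ 2 - ‖ν - muk1‖ ^ 2 - ‖γ - lamk‖ ^ 2 - ‖ν - muk‖ ^ 2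
        + 2 * ρ * ((inner ℝ (γ - lamk1) ((∑ i, A i (xk i)) - b) : ℝ)
          + (∑ j, (ν j - muk1 j) * ∑ i, g j i (xk i))
          + (inner ℝ (lamk1 - ls) ((∑ i, A i (xk1 i)) - b) : ℝ)
          + ∑ j, (muk1 j - ms j) * ∑ i, g j i (xk1 i)) := by
  set p : EuclideanSpace ℝ (Fin M) := WithLp.toLp 2 fun j => ∑ i, g j i (xk i)
  set q : EuclideanSpace ℝ (Fin M) := WithLp.toLp 2 fun j => ∑ i, g j i (xk1 i)
  have hlam := norm_sub_sq_le_of_projected_steps (z := ls)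
    (by simp [hγ] : ⟪lamk + ρ • ((∑ i, A i (xk i)) - b) - γ, lamk1 - γ⟫_ℝ ≤ 0)
    (by simp [hlamk1] : ⟪lamk + ρ • ((∑ i, A i (xk1 i)) - b) - lamk1, ls - lamk1⟫_ℝ ≤ 0)
  have hmuk1_nonneg (j : Fin M) : 0 ≤ muk1 j := (hmuk1 j).trans_ge (le_max_left _ _)
  have hmu := norm_sub_sq_le_of_projected_steps (u := muk) (p := p) (q := q) (ρ := ρ)
    (EuclideanSpace.inner_sub_posPart_nonpos hν hmuk1_nonneg)
    (EuclideanSpace.inner_sub_posPart_nonpos hmuk1 hsaddle.2.1)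
  rw [EuclideanSpace.inner_eq_sum_mul (ν - muk1),
    EuclideanSpace.inner_eq_sum_mul (muk1 - ms)] at hmu
  simp only [PiLp.sub_apply, p, q] at hmu
  linarith

/-- dual distance estimate, Proposition 1, second inequality. -/
theorem stmt_4 {N M m : ℕ} {n : Fin N → ℕ}
    (f : ∀ i, EuclideanSpace ℝ (Fin (n i)) → ℝ)
    (A : ∀ i, EuclideanSpace ℝ (Fin (n i)) →L[ℝ] EuclideanSpace ℝ (Fin m))
    (b : EuclideanSpace ℝ (Fin m))
    (g : Fin M → ∀ i, EuclideanSpace ℝ (Fin (n i)) → ℝ)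
    (X : ∀ i, Set (EuclideanSpace ℝ (Fin (n i))))
    (hX : ∀ i, IsClosed (X i) ∧ Convex ℝ (X i))
    (hf : ∀ i, Continuous (f i) ∧ ConvexOn ℝ Set.univ (f i))
    (hg : ∀ j i, Continuous (g j i) ∧ ConvexOn ℝ Set.univ (g j i))
    (xs : ∀ i, EuclideanSpace ℝ (Fin (n i)))
    (ls : EuclideanSpace ℝ (Fin m)) (ms : EuclideanSpace ℝ (Fin M))
    (hsaddle : IsSaddlePoint f A b g X xs ls ms)
    (ρ : ℝ) (hρ : 0 < ρ)
    (xk : ∀ i, EuclideanSpace ℝ (Fin (n i))) (hxk : ∀ i, xk i ∈ X i)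
    (xk1 : ∀ i, EuclideanSpace ℝ (Fin (n i))) (hxk1 : ∀ i, xk1 i ∈ X i)
    (lamk : EuclideanSpace ℝ (Fin m)) (muk : EuclideanSpace ℝ (Fin M))
    (hmuk : ∀ j, 0 ≤ muk j)
    (γ : EuclideanSpace ℝ (Fin m)) (ν : EuclideanSpace ℝ (Fin M))
    (lamk1 : EuclideanSpace ℝ (Fin m)) (muk1 : EuclideanSpace ℝ (Fin M))
    (hγ : γ = lamk + ρ • ((∑ i, A i (xk i)) - b))
    (hν : ∀ j, ν j = max 0 (muk j + ρ * ∑ i, g j i (xk i)))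
    (hlamk1 : lamk1 = lamk + ρ • ((∑ i, A i (xk1 i)) - b))
    (hmuk1 : ∀ j, muk1 j = max 0 (muk j + ρ * ∑ i, g j i (xk1 i))) :
    ‖lamk1 - ls‖ ^ 2 + ‖muk1 - ms‖ ^ 2
      ≤ ‖lamk - ls‖ ^ 2 + ‖muk - ms‖ ^ 2
        - ‖γ - lamk1‖ ^ 2 - ‖ν - muk1‖ ^ 2 - ‖γ - lamk‖ ^ 2 - ‖ν - muk‖ ^ 2
        + 2 * ρ * ((inner ℝ (γ - lamk1) ((∑ i, A i (xk i)) - b) : ℝ)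
          + (∑ j, (ν j - muk1 j) * ∑ i, g j i (xk i))
          + (inner ℝ (lamk1 - ls) ((∑ i, A i (xk1 i)) - b) : ℝ)
          + ∑ j, (muk1 j - ms j) * ∑ i, g j i (xk1 i)) :=
  stmt_4_general f A b g X xs ls ms hsaddle ρ xk xk1 lamk muk γ ν lamk1 muk1 hγ hν hlamk1 hmuk1
end

section
/- Assume each f_i and each g_{ji} is convex and differentiable on ℝ^{n_i}. Let γ ∈ ℝ^m, ν ∈ ℝ^M_{≥0}, λ' ∈ ℝ^m, μ' ∈ ℝ^M_{≥0}, ρ > 0, and x_i^k ∈ X_i for each i. Suppose for each i the point x_i⁺ minimizes x_i ↦ f_i(x_i) + γᵀ A_i x_i + Σ_{j=1}^M ν_j g_{ji}(x_i) + (1/(2ρ))‖x_i − x_i^k‖₂² over X_i, and define u_i = A_iᵀ(λ' − γ) + Σ_{j=1}^M (μ'_j − ν_j)·∇g_{ji}(x_i⁺) − (1/ρ)(x_i⁺ − x_i^k). Then (x_1⁺,…,x_N⁺) minimizes the function x ↦ L(x, λ', μ') − Σ_{i=1}^N x_iᵀ u_i over ∏_{i=1}^N X_i. -/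
open scoped BigOperators

/-! The proximal objective `φᵢ(y) = fᵢ(y) + γᵀAᵢy + Σⱼ νⱼ g_{ji}(y) + ‖y − xᵢᵏ‖² / (2ρ)` is
minimized over the convex set `Xᵢ` at `xᵢ⁺`, so its derivative there is nonnegative along every
direction `y − xᵢ⁺` with `y ∈ Xᵢ`. The vector `uᵢ` is exactly what makes the `i`-th block
`ψᵢ(y) = fᵢ(y) + λ'ᵀAᵢy + Σⱼ μ'ⱼ g_{ji}(y) − yᵀuᵢ` of the perturbed Lagrangian have the same
derivative at `xᵢ⁺` as `φᵢ`. As `μ' ≥ 0`, `ψᵢ` is convex, and the gradient inequality turns this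
first-order condition into minimality of `ψᵢ` on `Xᵢ`. The perturbed Lagrangian is `Σᵢ ψᵢ` minus
the constant `λ'ᵀb`. -/

open Set

section FirstOrder

variable {E : Type*} [NormedAddCommGroup E] [NormedSpace ℝ E] {s : Set E} {φ ψ : E → ℝ}
  {L : E →L[ℝ] ℝ} {x y : E}

theorem convexOn_sum_mul {ι : Type*} [Fintype ι] (hs : Convex ℝ s) {w : ι → ℝ}
    (hw : ∀ j, 0 ≤ w j) {g : ι → E → ℝ} (hg : ∀ j, ConvexOn ℝ s (g j)) :
    ConvexOn ℝ s fun y => ∑ j, w j * g j y := by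
  refine ⟨hs, fun x hx y hy a b ha hb hab => ?_⟩
  calc ∑ j, w j * g j (a • x + b • y) ≤ ∑ j, w j * (a • g j x + b • g j y) :=
        Finset.sum_le_sum fun j _ => mul_le_mul_of_nonneg_left ((hg j).2 hx hy ha hb hab) (hw j)
    _ = a • ∑ j, w j * g j x + b • ∑ j, w j * g j y := by
        simp only [smul_eq_mul, Finset.mul_sum, ← Finset.sum_add_distrib]
        exact Finset.sum_congr rfl fun j _ => by ring

theorem ConvexOn.apply_sub_le_of_hasFDerivAt (hψ : ConvexOn ℝ s ψ) (hx : x ∈ s) (hy : y ∈ s)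
    (hL : HasFDerivAt ψ L x) : L (y - x) ≤ ψ y - ψ x := by
  let ℓ : ℝ →ᵃ[ℝ] E := AffineMap.lineMap x y
  have hderiv : HasDerivAt (ψ ∘ ℓ) (L (y - x)) 0 := by
    rw [← AffineMap.lineMap_apply_zero (k := ℝ) x y] at hL
    exact hL.comp_hasDerivAt 0 AffineMap.hasDerivAt_lineMap
  simpa [ℓ, slope_def_field] using
    (hψ.comp_affineMap ℓ).le_slope_of_hasDerivAt (x := 0) (y := 1) (by simpa [ℓ] using hx)
      (by simpa [ℓ] using hy) zero_lt_one hderiv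

theorem IsMinOn.apply_sub_nonneg_of_hasFDerivAt (hmin : IsMinOn φ s x) (hs : Convex ℝ s)
    (hx : x ∈ s) (hy : y ∈ s) (hL : HasFDerivAt φ L x) : 0 ≤ L (y - x) :=
  hmin.localize.hasFDerivWithinAt_nonneg hL.hasFDerivWithinAt
    (sub_mem_posTangentConeAt_of_segment_subset (hs.segment_subset hx hy))

theorem IsMinOn.of_convexOn_of_hasFDerivAt (hmin : IsMinOn φ s x) (hs : Convex ℝ s)
    (hx : x ∈ s) (hψ : ConvexOn ℝ s ψ) (hφ : HasFDerivAt φ L x) (hψ' : HasFDerivAt ψ L x) :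
    IsMinOn ψ s x :=
  isMinOn_iff.2 fun _ hz => sub_nonneg.1 <|
    (hmin.apply_sub_nonneg_of_hasFDerivAt hs hx hz hφ).trans
      (hψ.apply_sub_le_of_hasFDerivAt hx hz hψ')

end FirstOrder

theorem isMinOn_perturbedLagrangian_of_isMinOn_proximal
    {E F ι : Type*} [NormedAddCommGroup E] [InnerProductSpace ℝ E] [CompleteSpace E]
    [NormedAddCommGroup F] [InnerProductSpace ℝ F] [CompleteSpace F] [Fintype ι]
    {X : Set E} (hX : Convex ℝ X) {xp : E} (hxp : xp ∈ X)
    {f : E → ℝ} (hf : ConvexOn ℝ univ f) (hfd : DifferentiableAt ℝ f xp)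
    {g : ι → E → ℝ} (hg : ∀ j, ConvexOn ℝ univ (g j)) (hgd : ∀ j, DifferentiableAt ℝ (g j) xp)
    (A : E →L[ℝ] F) (γ lam : F) (ν mu : ι → ℝ) (hmu : ∀ j, 0 ≤ mu j) (ρ : ℝ) (xk : E)
    (hprox : IsMinOn (fun y => f y + inner ℝ γ (A y) + ∑ j, ν j * g j y
      + 1 / (2 * ρ) * ‖y - xk‖ ^ 2) X xp)
    (u : E) (hu : u = ContinuousLinearMap.adjoint A (lam - γ)
        + (∑ j, (mu j - ν j) • gradient (g j) xp) - (1 / ρ) • (xp - xk)) :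
    IsMinOn (fun y => f y + inner ℝ lam (A y) + ∑ j, mu j * g j y - inner ℝ y u) X xp := by
  set ℓ : E →L[ℝ] ℝ := (innerSL ℝ lam).comp A - innerSL ℝ u
  have hψ : (fun y => f y + inner ℝ lam (A y) + ∑ j, mu j * g j y - inner ℝ y u)
      = fun y => f y + ∑ j, mu j * g j y + ℓ y := by
    ext y
    simp only [ℓ, sub_apply, ContinuousLinearMap.comp_apply,
      innerSL_apply_apply, real_inner_comm u y]
    ring
  rw [hψ]
  have hconv : ConvexOn ℝ X fun y => f y + ∑ j, mu j * g j y + ℓ y :=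
    ((hf.add (convexOn_sum_mul convex_univ hmu hg)).add
      ((ℓ : E →ₗ[ℝ] ℝ).convexOn convex_univ)).subset (subset_univ X) hX
  have hproxDeriv := ((hfd.hasFDerivAt.add ((innerSL ℝ γ).comp A).hasFDerivAt).add
      (HasFDerivAt.fun_sum (u := Finset.univ) fun j _ => (hgd j).hasFDerivAt.const_mul (ν j))).add
      (((hasFDerivAt_id xp).sub_const xk).norm_sq.const_mul (1 / (2 * ρ)))
  have hψDeriv := (hfd.hasFDerivAt.add
      (HasFDerivAt.fun_sum (u := Finset.univ) fun j _ => (hgd j).hasFDerivAt.const_mul (mu j))).add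
      ℓ.hasFDerivAt
  refine hprox.of_convexOn_of_hasFDerivAt hX hxp hconv hproxDeriv (hψDeriv.congr_fderiv ?_)
  ext v
  simp [ℓ, hu, gradient, ContinuousLinearMap.adjoint_inner_left,
    InnerProductSpace.toDual_symm_apply, sub_mul, Finset.sum_sub_distrib]
  ring

theorem lagrangian_eq_sum_sub {N M m : ℕ} {n : Fin N → ℕ}
    (f : ∀ i, EuclideanSpace ℝ (Fin (n i)) → ℝ)
    (A : ∀ i, EuclideanSpace ℝ (Fin (n i)) →L[ℝ] EuclideanSpace ℝ (Fin m))
    (b : EuclideanSpace ℝ (Fin m))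
    (g : Fin M → ∀ i, EuclideanSpace ℝ (Fin (n i)) → ℝ)
    (x : ∀ i, EuclideanSpace ℝ (Fin (n i)))
    (lam : EuclideanSpace ℝ (Fin m)) (mu : EuclideanSpace ℝ (Fin M)) :
    lagrangian f A b g x lam mu
      = ∑ i, (f i (x i) + inner ℝ lam (A i (x i)) + ∑ j, mu j * g j i (x i))
        - inner ℝ lam b := by
  simp only [lagrangian, inner_sub_right, inner_sum, Finset.sum_add_distrib, Finset.mul_sum]
  rw [Finset.sum_comm (γ := Fin N)]
  ring

theorem stmt_10_general {N M m : ℕ} {n : Fin N → ℕ}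
    (f : ∀ i, EuclideanSpace ℝ (Fin (n i)) → ℝ)
    (A : ∀ i, EuclideanSpace ℝ (Fin (n i)) →L[ℝ] EuclideanSpace ℝ (Fin m))
    (b : EuclideanSpace ℝ (Fin m))
    (g : Fin M → ∀ i, EuclideanSpace ℝ (Fin (n i)) → ℝ)
    (X : ∀ i, Set (EuclideanSpace ℝ (Fin (n i))))
    (hX : ∀ i, IsClosed (X i) ∧ Convex ℝ (X i))
    (hf : ∀ i, ConvexOn ℝ Set.univ (f i) ∧ Differentiable ℝ (f i))
    (hg : ∀ j i, ConvexOn ℝ Set.univ (g j i) ∧ Differentiable ℝ (g j i))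
    (γ : EuclideanSpace ℝ (Fin m)) (ν : EuclideanSpace ℝ (Fin M))
    (lam' : EuclideanSpace ℝ (Fin m)) (mu' : EuclideanSpace ℝ (Fin M))
    (hmu' : ∀ j, 0 ≤ mu' j)
    (ρ : ℝ)
    (xk : ∀ i, EuclideanSpace ℝ (Fin (n i)))
    (xp : ∀ i, EuclideanSpace ℝ (Fin (n i))) (hxp : ∀ i, xp i ∈ X i)
    (hmin : ∀ i, ∀ y ∈ X i,
      f i (xp i) + (inner ℝ γ (A i (xp i)) : ℝ) + (∑ j, ν j * g j i (xp i))
          + 1 / (2 * ρ) * ‖xp i - xk i‖ ^ 2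
        ≤ f i y + (inner ℝ γ (A i y) : ℝ) + (∑ j, ν j * g j i y)
          + 1 / (2 * ρ) * ‖y - xk i‖ ^ 2)
    (u : ∀ i, EuclideanSpace ℝ (Fin (n i)))
    (hu : ∀ i, u i = ContinuousLinearMap.adjoint (A i) (lam' - γ)
        + (∑ j, (mu' j - ν j) • gradient (g j i) (xp i)) - (1 / ρ) • (xp i - xk i)) :
    ∀ x : ∀ i, EuclideanSpace ℝ (Fin (n i)), (∀ i, x i ∈ X i) →
      lagrangian f A b g xp lam' mu' - ∑ i, (inner ℝ (xp i) (u i) : ℝ)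
        ≤ lagrangian f A b g x lam' mu' - ∑ i, (inner ℝ (x i) (u i) : ℝ) := by
  intro x hx
  have hblock : ∀ i, f i (xp i) + inner ℝ lam' (A i (xp i)) + ∑ j, mu' j * g j i (xp i)
        - inner ℝ (xp i) (u i)
      ≤ f i (x i) + inner ℝ lam' (A i (x i)) + ∑ j, mu' j * g j i (x i) - inner ℝ (x i) (u i) :=
    fun i => isMinOn_iff.1 (isMinOn_perturbedLagrangian_of_isMinOn_proximal (hX i).2 (hxp i)
      (hf i).1 ((hf i).2 _) (fun j => (hg j i).1) (fun j => (hg j i).2 _) (A i) γ lam' ν mu' hmu'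
      ρ (xk i) (isMinOn_iff.2 (hmin i)) (u i) (hu i)) (x i) (hx i)
  have hsum := Finset.sum_le_sum fun i (_ : i ∈ Finset.univ) => hblock i
  simp only [Finset.sum_sub_distrib] at hsum
  rw [lagrangian_eq_sum_sub, lagrangian_eq_sum_sub]
  linarith

/-- the primal PCPM update is a minimizer of the perturbed Lagrangian
`x ↦ L(x, λ', μ') − Σᵢ xᵢᵀuᵢ` over `∏ᵢ Xᵢ`, where
`uᵢ = Aᵢᵀ(λ' − γ) + Σⱼ (μ'ⱼ − νⱼ)∇g_{ji}(xᵢ⁺) − (1/ρ)(xᵢ⁺ − xᵢᵏ)`. -/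
theorem stmt_10 {N M m : ℕ} {n : Fin N → ℕ}
    (f : ∀ i, EuclideanSpace ℝ (Fin (n i)) → ℝ)
    (A : ∀ i, EuclideanSpace ℝ (Fin (n i)) →L[ℝ] EuclideanSpace ℝ (Fin m))
    (b : EuclideanSpace ℝ (Fin m))
    (g : Fin M → ∀ i, EuclideanSpace ℝ (Fin (n i)) → ℝ)
    (X : ∀ i, Set (EuclideanSpace ℝ (Fin (n i))))
    (hX : ∀ i, IsClosed (X i) ∧ Convex ℝ (X i))
    (hf : ∀ i, ConvexOn ℝ Set.univ (f i) ∧ Differentiable ℝ (f i))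
    (hg : ∀ j i, ConvexOn ℝ Set.univ (g j i) ∧ Differentiable ℝ (g j i))
    (γ : EuclideanSpace ℝ (Fin m)) (ν : EuclideanSpace ℝ (Fin M)) (hν : ∀ j, 0 ≤ ν j)
    (lam' : EuclideanSpace ℝ (Fin m)) (mu' : EuclideanSpace ℝ (Fin M))
    (hmu' : ∀ j, 0 ≤ mu' j)
    (ρ : ℝ) (hρ : 0 < ρ)
    (xk : ∀ i, EuclideanSpace ℝ (Fin (n i))) (hxk : ∀ i, xk i ∈ X i)
    (xp : ∀ i, EuclideanSpace ℝ (Fin (n i))) (hxp : ∀ i, xp i ∈ X i)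
    (hmin : ∀ i, ∀ y ∈ X i,
      f i (xp i) + (inner ℝ γ (A i (xp i)) : ℝ) + (∑ j, ν j * g j i (xp i))
          + 1 / (2 * ρ) * ‖xp i - xk i‖ ^ 2
        ≤ f i y + (inner ℝ γ (A i y) : ℝ) + (∑ j, ν j * g j i y)
          + 1 / (2 * ρ) * ‖y - xk i‖ ^ 2)
    (u : ∀ i, EuclideanSpace ℝ (Fin (n i)))
    (hu : ∀ i, u i = ContinuousLinearMap.adjoint (A i) (lam' - γ)
        + (∑ j, (mu' j - ν j) • gradient (g j i) (xp i)) - (1 / ρ) • (xp i - xk i)) :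
    ∀ x : ∀ i, EuclideanSpace ℝ (Fin (n i)), (∀ i, x i ∈ X i) →
      lagrangian f A b g xp lam' mu' - ∑ i, (inner ℝ (xp i) (u i) : ℝ)
        ≤ lagrangian f A b g x lam' mu' - ∑ i, (inner ℝ (x i) (u i) : ℝ) :=
  stmt_10_general f A b g X hX hf hg γ ν lam' mu' hmu' ρ xk xp hxp hmin u hu
end

section
/- Let X ⊆ ℝⁿ be closed and convex, f : ℝⁿ → ℝ continuous and strongly convex on X with modulus σ > 0, A ∈ ℝ^{m×n}, p ∈ ℝ^m, x̄ ∈ X, and ρ > 0. Suppose x⁺ minimizes x ↦ f(x) + pᵀA x + (1/(2ρ))‖x − x̄‖₂² over X. Then for every x' ∈ X and every λ ∈ ℝ^m: f(x⁺) − f(x') + λᵀ(A x⁺ − A x') + (σ/2 + 1/(2ρ))‖x⁺ − x'‖₂² + (1/(2ρ))‖x⁺ − x̄‖₂² − (1/(2ρ))‖x̄ − x'‖₂² + (p − λ)ᵀ(A x⁺ − A x') ≤ 0. -/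
/-!
The objective `g x = f x + ⟪p, A x⟫ + ‖x - x̄‖² / (2ρ)` is `(σ + 1/ρ)`-strongly convex on `X`: the
linear term does not change the modulus and the proximal term adds `1/ρ`. At a minimizer `x⁺` of a
`μ`-strongly convex function, comparing with the points of the segment `[x⁺, x']` and letting them
tend to `x⁺` gives the quadratic growth bound `g x⁺ + μ/2 ‖x⁺ - x'‖² ≤ g x'`. Expanding `g` turns
this bound into the claimed inequality, in which the `λ`-terms cancel.
-/

open Set

section NormedSpace

variable {E : Type*} [NormedAddCommGroup E] [NormedSpace ℝ E]
  {s : Set E} {m n : ℝ} {f g : E → ℝ}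

lemma StrongConvexOn.add (hf : StrongConvexOn s m f) (hg : StrongConvexOn s n g) :
    StrongConvexOn s (m + n) (f + g) := by
  refine (UniformConvexOn.add hf hg).mono fun r ↦ le_of_eq ?_
  simp only [Pi.add_apply]
  ring

lemma StrongConvexOn.add_convexOn (hf : StrongConvexOn s m f) (hg : ConvexOn ℝ s g) :
    StrongConvexOn s m (f + g) := by
  simpa using hf.add (strongConvexOn_zero.mpr hg)

lemma StrongConvexOn.add_sq_norm_sub_le_of_isMinOn (hf : StrongConvexOn s m f) {x₀ x : E}
    (hmin : IsMinOn f s x₀) (hx₀ : x₀ ∈ s) (hx : x ∈ s) :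
    f x₀ + m / 2 * ‖x₀ - x‖ ^ 2 ≤ f x := by
  set c := m / 2 * ‖x₀ - x‖ ^ 2
  have hsegment : Ioo (0 : ℝ) 1 ⊆ {t | f x₀ + (1 - t) * c ≤ f x} := by
    intro t ⟨ht₀, ht₁⟩
    have h1t : 0 ≤ 1 - t := sub_nonneg.mpr ht₁.le
    have hconv := hf.2 hx₀ hx h1t ht₀.le (sub_add_cancel 1 t)
    have hle := isMinOn_iff.mp hmin _ (hf.1 hx₀ hx h1t ht₀.le (sub_add_cancel 1 t))
    simp only [smul_eq_mul] at hconv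
    have hscaled : t * (f x₀ + (1 - t) * c) ≤ t * f x := by linear_combination hle + hconv
    exact le_of_mul_le_mul_left hscaled ht₀
  have hclosed : IsClosed {t : ℝ | f x₀ + (1 - t) * c ≤ f x} :=
    isClosed_le (by fun_prop) continuous_const
  have h0 : (0 : ℝ) ∈ closure (Ioo 0 1) := by simp [closure_Ioo zero_ne_one]
  simpa using hclosed.closure_subset_iff.mpr hsegment h0

end NormedSpace

section InnerProductSpace

variable {E : Type*} [NormedAddCommGroup E] [InnerProductSpace ℝ E] {s : Set E}

lemma strongConvexOn_mul_sq_norm_sub (hs : Convex ℝ s) (c : ℝ) (a : E) :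
    StrongConvexOn s (2 * c) fun x ↦ c * ‖x - a‖ ^ 2 := by
  -- `c ‖x - a‖² - c ‖x‖² = c ‖a‖² - 2c ⟪a, x⟫` is affine in `x`.
  refine strongConvexOn_iff_convex.mpr <|
    ((-(2 * c)) • innerₛₗ ℝ a).convexOn hs |>.add_const (c * ‖a‖ ^ 2) |>.congr fun x _ ↦ ?_
  simp only [Pi.add_apply, LinearMap.smul_apply, innerₛₗ_apply_apply, smul_eq_mul,
    norm_sub_sq_real, real_inner_comm a x]
  ring

end InnerProductSpace

theorem stmt_12_general {n m : ℕ} (X : Set (EuclideanSpace ℝ (Fin n)))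
    (f : EuclideanSpace ℝ (Fin n) → ℝ) (σ : ℝ)
    (hfstrong : ConvexOn ℝ X (fun x => f x - σ / 2 * ‖x‖ ^ 2))
    (A : EuclideanSpace ℝ (Fin n) →L[ℝ] EuclideanSpace ℝ (Fin m))
    (p : EuclideanSpace ℝ (Fin m))
    (xbar : EuclideanSpace ℝ (Fin n))
    (ρ : ℝ)
    (xp : EuclideanSpace ℝ (Fin n)) (hxp : xp ∈ X)
    (hmin : ∀ y ∈ X,
      f xp + (inner ℝ p (A xp) : ℝ) + 1 / (2 * ρ) * ‖xp - xbar‖ ^ 2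
        ≤ f y + (inner ℝ p (A y) : ℝ) + 1 / (2 * ρ) * ‖y - xbar‖ ^ 2) :
    ∀ x' ∈ X, ∀ lam : EuclideanSpace ℝ (Fin m),
      f xp - f x' + (inner ℝ lam (A xp - A x') : ℝ)
          + (σ / 2 + 1 / (2 * ρ)) * ‖xp - x'‖ ^ 2
          + 1 / (2 * ρ) * ‖xp - xbar‖ ^ 2 - 1 / (2 * ρ) * ‖xbar - x'‖ ^ 2
          + (inner ℝ (p - lam) (A xp - A x') : ℝ) ≤ 0 := by
  intro x' hx' lam
  have hf : StrongConvexOn X σ f := strongConvexOn_iff_convex.mpr hfstrong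
  have hlin : ConvexOn ℝ X fun x ↦ (inner ℝ p (A x) : ℝ) :=
    ((innerₛₗ ℝ p).comp A.toLinearMap).convexOn hf.1
  have hobj :=
    (hf.add_convexOn hlin).add (strongConvexOn_mul_sq_norm_sub hf.1 (1 / (2 * ρ)) xbar)
  have hgrowth := hobj.add_sq_norm_sub_le_of_isMinOn (isMinOn_iff.mpr hmin) hxp hx'
  have hinner : (inner ℝ lam (A xp - A x') : ℝ) + inner ℝ (p - lam) (A xp - A x')
      = inner ℝ p (A xp) - inner ℝ p (A x') := by
    rw [← inner_add_left, add_sub_cancel, inner_sub_right]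
  simp only [Pi.add_apply] at hgrowth
  rw [norm_sub_rev xbar x']
  linarith

/-- key estimate for one block of the asynchronous scheme.
`f` is continuous and strongly convex on `X` with modulus `σ > 0`
(i.e. `x ↦ f x − (σ/2)‖x‖²` is convex on `X`), and `x⁺` minimizes
`x ↦ f x + pᵀAx + (1/(2ρ))‖x − x̄‖²` over `X`. -/
theorem stmt_12 {n m : ℕ} (X : Set (EuclideanSpace ℝ (Fin n)))
    (hXclosed : IsClosed X) (hXconvex : Convex ℝ X)
    (f : EuclideanSpace ℝ (Fin n) → ℝ) (σ : ℝ) (hσ : 0 < σ)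
    (hfcont : ContinuousOn f X)
    (hfstrong : ConvexOn ℝ X (fun x => f x - σ / 2 * ‖x‖ ^ 2))
    (A : EuclideanSpace ℝ (Fin n) →L[ℝ] EuclideanSpace ℝ (Fin m))
    (p : EuclideanSpace ℝ (Fin m))
    (xbar : EuclideanSpace ℝ (Fin n)) (hxbar : xbar ∈ X)
    (ρ : ℝ) (hρ : 0 < ρ)
    (xp : EuclideanSpace ℝ (Fin n)) (hxp : xp ∈ X)
    (hmin : ∀ y ∈ X,
      f xp + (inner ℝ p (A xp) : ℝ) + 1 / (2 * ρ) * ‖xp - xbar‖ ^ 2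
        ≤ f y + (inner ℝ p (A y) : ℝ) + 1 / (2 * ρ) * ‖y - xbar‖ ^ 2) :
    ∀ x' ∈ X, ∀ lam : EuclideanSpace ℝ (Fin m),
      f xp - f x' + (inner ℝ lam (A xp - A x') : ℝ)
          + (σ / 2 + 1 / (2 * ρ)) * ‖xp - x'‖ ^ 2
          + 1 / (2 * ρ) * ‖xp - xbar‖ ^ 2 - 1 / (2 * ρ) * ‖xbar - x'‖ ^ 2
          + (inner ℝ (p - lam) (A xp - A x') : ℝ) ≤ 0 :=
  stmt_12_general X f σ hfstrong A p xbar ρ xp hxp hmin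
end
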